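/- A commutative †-Frobenius monoid on H is determined by its copyable elements: if (m₁, u₁) and (m₂, u₂) are commutative †-Frobenius monoids on H whose sets of copyable elements coincide, then m₁ = m₂ and u₁ = u₂. -/

import Mathlib

noncomputable section

open scoped TensorProduct ComplexConjugate InnerProductSpace

open scoped TensorProduct ComplexConjugate InnerProductSpace

variable {H : Type*} [NormedAddCommGroup H] [InnerProductSpace ℂ H] [FiniteDimensional ℂ H]

namespace TensorIP

variable (H) in
/-- A basis of `H ⊗ H` built from an orthonormal basis of `H`. -/
def tb : Module.Basis (Fin (Module.finrank ℂ H) × Fin (Module.finrank ℂ H)) ℂ (H ⊗[ℂ] H) :=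
  Module.Basis.tensorProduct (stdOrthonormalBasis ℂ H).toBasis (stdOrthonormalBasis ℂ H).toBasis

variable (H) in
/-- The canonical inner product space structure on `H ⊗ H`, which is determined by
`⟪a ⊗ b, c ⊗ d⟫ = ⟪a,c⟫ * ⟪b,d⟫` (see `TensorIP.inner_tmul` below). -/
def core : InnerProductSpace.Core ℂ (H ⊗[ℂ] H) where
  inner x y := ∑ p, conj ((tb H).repr x p) * ((tb H).repr y p)
  conj_inner_symm x y := by
    simp only [map_sum, map_mul, starRingEnd_self_apply]
    exact Finset.sum_congr rfl fun p _ => by ring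
  re_inner_nonneg x := by
    show 0 ≤ RCLike.re (∑ p, conj ((tb H).repr x p) * ((tb H).repr x p))
    have h : ∀ p : Fin (Module.finrank ℂ H) × Fin (Module.finrank ℂ H),
        conj ((tb H).repr x p) * ((tb H).repr x p)
          = ((Complex.normSq ((tb H).repr x p) : ℝ) : ℂ) := fun p => by
      rw [mul_comm, Complex.mul_conj]
    simp only [h]
    rw [map_sum]
    refine Finset.sum_nonneg fun p _ => ?_
    simp [Complex.normSq_nonneg]
  add_left x y z := by
    simp only [map_add, Finsupp.add_apply]
    rw [← Finset.sum_add_distrib]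
    exact Finset.sum_congr rfl fun p _ => by ring
  smul_left x y r := by
    simp only [map_smul, Finsupp.smul_apply, smul_eq_mul, map_mul, Finset.mul_sum]
    exact Finset.sum_congr rfl fun p _ => by ring
  definite x hx := by
    have hx' : ∑ p, conj ((tb H).repr x p) * ((tb H).repr x p) = 0 := hx
    have h2 : ∑ p, ((Complex.normSq ((tb H).repr x p) : ℝ) : ℂ) = 0 := by
      rw [← hx']
      exact Finset.sum_congr rfl fun p _ => by rw [mul_comm, Complex.mul_conj]
    have h3 : ∑ p, Complex.normSq ((tb H).repr x p) = 0 := by exact_mod_cast h2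
    have h4 : ∀ p ∈ Finset.univ, Complex.normSq ((tb H).repr x p) = 0 :=
      (Finset.sum_eq_zero_iff_of_nonneg fun p _ => Complex.normSq_nonneg _).mp h3
    have h5 : (tb H).repr x = 0 := by
      ext p
      exact Complex.normSq_eq_zero.mp (h4 p (Finset.mem_univ p))
    simpa using (tb H).repr.map_eq_zero_iff.mp h5

instance : NormedAddCommGroup (H ⊗[ℂ] H) :=
  @InnerProductSpace.Core.toNormedAddCommGroup ℂ (H ⊗[ℂ] H) _ _ _ (core H)

instance : InnerProductSpace ℂ (H ⊗[ℂ] H) := InnerProductSpace.ofCore (core H).toCore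

theorem inner_tmul (a b c d : H) :
    @inner ℂ (H ⊗[ℂ] H) InnerProductSpace.toInner (a ⊗ₜ[ℂ] b) (c ⊗ₜ[ℂ] d) = ⟪a, c⟫_ℂ * ⟪b, d⟫_ℂ := by
  have key : ∀ (x y : H) (p : Fin (Module.finrank ℂ H) × Fin (Module.finrank ℂ H)),
      (tb H).repr (x ⊗ₜ[ℂ] y) p
        = ⟪(stdOrthonormalBasis ℂ H) p.1, x⟫_ℂ * ⟪(stdOrthonormalBasis ℂ H) p.2, y⟫_ℂ := by
    rintro x y ⟨i, j⟩
    rw [tb, Module.Basis.tensorProduct_repr_tmul_apply, smul_eq_mul,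
      OrthonormalBasis.coe_toBasis_repr_apply, OrthonormalBasis.coe_toBasis_repr_apply,
      OrthonormalBasis.repr_apply_apply, OrthonormalBasis.repr_apply_apply, mul_comm]
  show (∑ p, conj ((tb H).repr (a ⊗ₜ[ℂ] b) p) * ((tb H).repr (c ⊗ₜ[ℂ] d) p)) = _
  simp only [key, map_mul]
  rw [← Finset.univ_product_univ, Finset.sum_product]
  have h : ∀ i j : Fin (Module.finrank ℂ H),
      (conj ⟪(stdOrthonormalBasis ℂ H) i, a⟫_ℂ * conj ⟪(stdOrthonormalBasis ℂ H) j, b⟫_ℂ) *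
        (⟪(stdOrthonormalBasis ℂ H) i, c⟫_ℂ * ⟪(stdOrthonormalBasis ℂ H) j, d⟫_ℂ)
      = (⟪a, (stdOrthonormalBasis ℂ H) i⟫_ℂ * ⟪(stdOrthonormalBasis ℂ H) i, c⟫_ℂ) *
        (⟪b, (stdOrthonormalBasis ℂ H) j⟫_ℂ * ⟪(stdOrthonormalBasis ℂ H) j, d⟫_ℂ) := by
    intro i j
    rw [inner_conj_symm, inner_conj_symm]; ring
  simp only [h]
  rw [← Finset.sum_mul_sum]
  rw [OrthonormalBasis.sum_inner_mul_inner, OrthonormalBasis.sum_inner_mul_inner]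

end TensorIP

/-- `(H, m, u)` is a commutative †-Frobenius monoid: `m` is associative and commutative,
`u 1` is a two-sided unit for `m`, and the Frobenius law
`(m ⊗ id) ∘ (id ⊗ δ) = δ ∘ m` holds, where `δ := m†`. -/
def IsFrobenius (m : H ⊗[ℂ] H →ₗ[ℂ] H) (u : ℂ →ₗ[ℂ] H) : Prop :=
  (m ∘ₗ TensorProduct.map m LinearMap.id
      = m ∘ₗ TensorProduct.map LinearMap.id m ∘ₗ (TensorProduct.assoc ℂ H H H).toLinearMap)
    ∧ (m ∘ₗ (TensorProduct.comm ℂ H H).toLinearMap = m)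
    ∧ (∀ x : H, m (u 1 ⊗ₜ[ℂ] x) = x)
    ∧ (∀ x : H, m (x ⊗ₜ[ℂ] u 1) = x)
    ∧ (TensorProduct.map m LinearMap.id ∘ₗ (TensorProduct.assoc ℂ H H H).symm.toLinearMap
        ∘ₗ TensorProduct.map LinearMap.id (LinearMap.adjoint m)
      = LinearMap.adjoint m ∘ₗ m)

/-- `ψ` is a copyable element: `δ ψ = ψ ⊗ ψ` and `ε ψ = 1`, where `δ := m†`, `ε := u†`. -/
def Copyable (m : H ⊗[ℂ] H →ₗ[ℂ] H) (u : ℂ →ₗ[ℂ] H) (ψ : H) : Prop :=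
  LinearMap.adjoint m ψ = ψ ⊗ₜ[ℂ] ψ ∧ LinearMap.adjoint u ψ = 1

/-!
The left multiplications `L a = m (a ⊗ ·)` commute, and the Frobenius law makes each adjoint
`(L a)†` an `m`-module map, so `(L a)†` commutes with every `L b` as well. Hence the self-adjoint
operators `L a + (L a)†` are simultaneously diagonalisable, and on a joint eigenvector `v` we get
`L x v = χ x • v` for a character `χ` of `(H, m, u)`; the Riesz representative of `χ` is copyable.
So a vector `x` orthogonal to all copyable elements has `L x = 0`, i.e. `x = 0`: the copyable
elements span `H`. Since `⟪ψ, m (a ⊗ b)⟫ = ⟪ψ, a⟫ * ⟪ψ, b⟫` and `⟪ψ, u 1⟫ = 1` for copyable `ψ`,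
they determine `m` and `u`.
-/

namespace TensorIP

theorem adjoint_map (f g : H →ₗ[ℂ] H) :
    LinearMap.adjoint (TensorProduct.map f g)
      = TensorProduct.map (LinearMap.adjoint f) (LinearMap.adjoint g) := by
  rw [eq_comm, LinearMap.eq_adjoint_iff]
  intro x y
  induction x using TensorProduct.induction_on with
  | zero => simp
  | add x₁ x₂ hx₁ hx₂ => rw [map_add, inner_add_left, inner_add_left, hx₁, hx₂]
  | tmul a b =>
    induction y using TensorProduct.induction_on with
    | zero => simp
    | add y₁ y₂ hy₁ hy₂ => rw [map_add, inner_add_right, inner_add_right, hy₁, hy₂]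
    | tmul c d => simp [inner_tmul, LinearMap.adjoint_inner_left]

end TensorIP

section

variable {m : H ⊗[ℂ] H →ₗ[ℂ] H} {u : ℂ →ₗ[ℂ] H}

variable (m) in
def mulLeft : H →ₗ[ℂ] H →ₗ[ℂ] H := (TensorProduct.mk ℂ H H).compr₂ m

omit [FiniteDimensional ℂ H] in
@[simp] lemma mulLeft_apply (a b : H) : mulLeft m a b = m (a ⊗ₜ b) := rfl

variable (m) in
/-- Twice the real part of `mulLeft m a`; as `mulLeft m (I • a) = I • mulLeft m a`, these
self-adjoint operators still determine `mulLeft m` (see `two_smul_mulLeft`). -/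
def mulLeftRe (a : H) : H →ₗ[ℂ] H := mulLeft m a + LinearMap.adjoint (mulLeft m a)

lemma isSymmetric_mulLeftRe (a : H) : (mulLeftRe m a).IsSymmetric := by
  rw [LinearMap.isSymmetric_iff_isSelfAdjoint, mulLeftRe, ← LinearMap.star_eq_adjoint]
  exact IsSelfAdjoint.add_star_self _

lemma two_smul_mulLeft (a : H) :
    (2 : ℂ) • mulLeft m a = mulLeftRe m a - Complex.I • mulLeftRe m (Complex.I • a) := by
  simp only [mulLeftRe, map_smul, map_smulₛₗ, Complex.conj_I]
  match_scalars <;> ring_nf <;> simp only [Complex.I_sq] <;> ring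

lemma mulLeft_apply_eq_smul_of_mem_iInf_eigenspace {γ : H → ℂ} {v : H}
    (hv : v ∈ ⨅ a, Module.End.eigenspace (mulLeftRe m a) (γ a)) (x : H) :
    mulLeft m x v = ((γ x - Complex.I * γ (Complex.I • x)) / 2) • v := by
  have hre (a : H) : mulLeftRe m a v = γ a • v :=
    Module.End.mem_eigenspace_iff.mp ((Submodule.mem_iInf _).mp hv a)
  have h2 := LinearMap.congr_fun (two_smul_mulLeft (m := m) x) v
  rw [LinearMap.smul_apply, LinearMap.sub_apply, LinearMap.smul_apply, hre, hre] at h2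
  rw [← inv_smul_smul₀ (two_ne_zero (α := ℂ)) (mulLeft m x v), h2]
  module

lemma copyable_iff {ψ : H} : Copyable m u ψ ↔
    (∀ a b, ⟪ψ, m (a ⊗ₜ b)⟫_ℂ = ⟪ψ, a⟫_ℂ * ⟪ψ, b⟫_ℂ) ∧ ⟪ψ, u 1⟫_ℂ = 1 := by
  have hunit : conj (LinearMap.adjoint u ψ) = ⟪ψ, u 1⟫_ℂ := by
    simpa using LinearMap.adjoint_inner_left u 1 ψ
  refine and_congr ⟨fun h a b => ?_, fun h => ext_inner_right ℂ fun z => ?_⟩ ?_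
  · rw [← LinearMap.adjoint_inner_left, h, TensorIP.inner_tmul]
  · induction z using TensorProduct.induction_on with
    | zero => simp
    | add z₁ z₂ h₁ h₂ => rw [inner_add_right, inner_add_right, h₁, h₂]
    | tmul a b => rw [LinearMap.adjoint_inner_left, h, TensorIP.inner_tmul]
  · rw [← hunit, map_eq_one_iff _ (RingHom.injective _)]

namespace IsFrobenius

variable (hf : IsFrobenius m u)
include hf

lemma mul_comm (a b : H) : m (a ⊗ₜ b) = m (b ⊗ₜ a) := by
  simpa using LinearMap.congr_fun hf.2.1 (b ⊗ₜ a)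

lemma mulLeft_mul (a b : H) : mulLeft m (m (a ⊗ₜ b)) = mulLeft m a ∘ₗ mulLeft m b := by
  ext c
  simpa using LinearMap.congr_fun hf.1 ((a ⊗ₜ b) ⊗ₜ c)

lemma commute_mulLeft (a b : H) : Commute (mulLeft m a) (mulLeft m b) := by
  rw [commute_iff_eq, Module.End.mul_eq_comp, Module.End.mul_eq_comp, ← hf.mulLeft_mul,
    ← hf.mulLeft_mul, hf.mul_comm]

lemma comul_comp_mulLeft (a : H) :
    LinearMap.adjoint m ∘ₗ mulLeft m a
      = TensorProduct.map (mulLeft m a) LinearMap.id ∘ₗ LinearMap.adjoint m := by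
  ext b
  have hfrob := LinearMap.congr_fun hf.2.2.2.2 (a ⊗ₜ b)
  simp only [LinearMap.comp_apply, LinearEquiv.coe_coe, TensorProduct.map_tmul,
    LinearMap.id_coe, id_eq] at hfrob
  rw [LinearMap.comp_apply, mulLeft_apply, ← hfrob, LinearMap.comp_apply]
  induction LinearMap.adjoint m b using TensorProduct.induction_on with
  | zero => simp
  | add t₁ t₂ h₁ h₂ => simp only [TensorProduct.tmul_add, map_add, h₁, h₂]
  | tmul x y => simp

lemma adjoint_mulLeft_comp_mul (a : H) :
    LinearMap.adjoint (mulLeft m a) ∘ₗ m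
      = m ∘ₗ TensorProduct.map (LinearMap.adjoint (mulLeft m a)) LinearMap.id := by
  simpa [LinearMap.adjoint_comp, TensorIP.adjoint_map] using
    congrArg LinearMap.adjoint (hf.comul_comp_mulLeft a)

lemma commute_adjoint_mulLeft (a b : H) :
    Commute (LinearMap.adjoint (mulLeft m a)) (mulLeft m b) := by
  rw [commute_iff_eq]
  ext y
  have hmod := LinearMap.congr_fun (hf.adjoint_mulLeft_comp_mul a) (y ⊗ₜ b)
  simp only [LinearMap.comp_apply, TensorProduct.map_tmul, LinearMap.id_coe, id_eq] at hmod
  simp only [Module.End.mul_apply, mulLeft_apply, hf.mul_comm b, hmod]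

lemma commute_mulLeftRe (a b : H) : Commute (mulLeftRe m a) (mulLeftRe m b) := by
  have h₁ := hf.commute_mulLeft a b
  have h₂ := hf.commute_adjoint_mulLeft a b
  have h₃ := (hf.commute_adjoint_mulLeft b a).symm
  simp only [mulLeftRe, ← LinearMap.star_eq_adjoint] at h₂ h₃ ⊢
  exact (h₁.add_right h₃).add_left (h₂.add_right h₁.star_star)

lemma exists_copyable_of_mulLeft_eq_smul {v : H} (hv : v ≠ 0) {χ : H → ℂ}
    (hχ : ∀ x, mulLeft m x v = χ x • v) : ∃ ψ, Copyable m u ψ ∧ ∀ x, χ x = ⟪ψ, x⟫_ℂ := by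
  have hinj := smul_left_injective ℂ hv
  let χₗ : H →ₗ[ℂ] ℂ :=
    { toFun := χ
      map_add' := fun x y => hinj <| by simp only [add_smul, ← hχ, map_add, LinearMap.add_apply]
      map_smul' := fun c x => hinj <| by simp [mul_smul, ← hχ] }
  have hχψ (x : H) : χ x = ⟪LinearMap.adjoint χₗ 1, x⟫_ℂ := by
    simp [LinearMap.adjoint_inner_left, χₗ]
  refine ⟨LinearMap.adjoint χₗ 1, copyable_iff.mpr ⟨fun a b => ?_, ?_⟩, hχψ⟩
  · rw [← hχψ, ← hχψ, ← hχψ]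
    apply hinj
    dsimp only
    rw [← hχ, hf.mulLeft_mul, LinearMap.comp_apply, hχ, map_smul, hχ, smul_smul, _root_.mul_comm]
  · rw [← hχψ]
    apply hinj
    simp only [← hχ, mulLeft_apply, hf.2.2.1, one_smul]

lemma eq_zero_of_forall_copyable_inner_eq_zero {x : H}
    (hx : ∀ ψ, Copyable m u ψ → ⟪ψ, x⟫_ℂ = 0) : x = 0 := by
  suffices mulLeft m x = 0 by simpa [hf.2.2.2.1 x] using LinearMap.congr_fun this (u 1)
  rw [← LinearMap.ker_eq_top, eq_top_iff, ← LinearMap.IsSymmetric.iSup_iInf_eq_top_of_commute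
    isSymmetric_mulLeftRe fun a b _ => hf.commute_mulLeftRe a b]
  refine iSup_le fun γ v hv => ?_
  rcases eq_or_ne v 0 with rfl | hv0
  · exact zero_mem _
  have hχ := mulLeft_apply_eq_smul_of_mem_iInf_eigenspace hv
  obtain ⟨ψ, hψ, hχψ⟩ := hf.exists_copyable_of_mulLeft_eq_smul hv0 hχ
  rw [LinearMap.mem_ker, hχ, hχψ, hx ψ hψ, zero_smul]

lemma eq_of_forall_copyable_inner_eq {x y : H}
    (h : ∀ ψ, Copyable m u ψ → ⟪ψ, x⟫_ℂ = ⟪ψ, y⟫_ℂ) : x = y :=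
  sub_eq_zero.mp <| hf.eq_zero_of_forall_copyable_inner_eq_zero fun ψ hψ => by
    rw [inner_sub_right, h ψ hψ, sub_self]

end IsFrobenius

end

theorem frobenius_ext_of_copyable_general (m₁ m₂ : H ⊗[ℂ] H →ₗ[ℂ] H) (u₁ u₂ : ℂ →ₗ[ℂ] H)
    (h₁ : IsFrobenius m₁ u₁)
    (hcopy : {ψ : H | Copyable m₁ u₁ ψ} = {ψ : H | Copyable m₂ u₂ ψ}) :
    m₁ = m₂ ∧ u₁ = u₂ := by
  have hc (ψ : H) (hψ : Copyable m₁ u₁ ψ) : Copyable m₂ u₂ ψ := (Set.ext_iff.mp hcopy ψ).mp hψ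
  refine ⟨TensorProduct.ext' fun a b => ?_, LinearMap.ext_ring ?_⟩
  · refine h₁.eq_of_forall_copyable_inner_eq fun ψ hψ => ?_
    rw [(copyable_iff.mp hψ).1, (copyable_iff.mp (hc ψ hψ)).1]
  · refine h₁.eq_of_forall_copyable_inner_eq fun ψ hψ => ?_
    rw [(copyable_iff.mp hψ).2, (copyable_iff.mp (hc ψ hψ)).2]

/-- A commutative †-Frobenius monoid on `H` is determined by its copyable elements. -/
theorem frobenius_ext_of_copyable (m₁ m₂ : H ⊗[ℂ] H →ₗ[ℂ] H) (u₁ u₂ : ℂ →ₗ[ℂ] H)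
    (h₁ : IsFrobenius m₁ u₁) (h₂ : IsFrobenius m₂ u₂)
    (hcopy : {ψ : H | Copyable m₁ u₁ ψ} = {ψ : H | Copyable m₂ u₂ ψ}) :
    m₁ = m₂ ∧ u₁ = u₂ :=
  frobenius_ext_of_copyable_general m₁ m₂ u₁ u₂ h₁ hcopy
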